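/- There exists a history-deterministic coBüchi automaton with 61 states that recognises the complement Σ^ω ∖ L_main. -/

import Mathlib

/-- A (nondeterministic) Büchi/coBüchi automaton: an initial state, a set of
transitions, and a subset of *significant* transitions. -/
structure BuchiAutomaton (σ : Type) (Q : Type) where
  init : Q
  trans : Set (Q × σ × Q)
  sig : Set (Q × σ × Q)
  sig_sub : sig ⊆ trans

namespace BuchiAutomaton

variable {σ Q : Type}

/-- `ρ` is a run of `A` on the infinite word `w`, starting at the state `p`. -/
def IsRunFrom (A : BuchiAutomaton σ Q) (p : Q) (w : ℕ → σ) (ρ : ℕ → Q) : Prop :=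
  ρ 0 = p ∧ ∀ i, (ρ i, w i, ρ (i + 1)) ∈ A.trans

/-- Büchi acceptance: the run contains infinitely many significant transitions. -/
def BuchiAcc (A : BuchiAutomaton σ Q) (w : ℕ → σ) (ρ : ℕ → Q) : Prop :=
  ∀ N, ∃ i, N ≤ i ∧ (ρ i, w i, ρ (i + 1)) ∈ A.sig

/-- coBüchi acceptance: the run contains finitely many significant transitions. -/
def CoBuchiAcc (A : BuchiAutomaton σ Q) (w : ℕ → σ) (ρ : ℕ → Q) : Prop :=
  ∃ N, ∀ i, N ≤ i → (ρ i, w i, ρ (i + 1)) ∉ A.sig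

/-- The language of `A` (as a Büchi automaton), with initial state `p`. -/
def LangFrom (A : BuchiAutomaton σ Q) (p : Q) : Set (ℕ → σ) :=
  {w | ∃ ρ, A.IsRunFrom p w ρ ∧ A.BuchiAcc w ρ}

/-- The language of `A`, read as a Büchi automaton. -/
def Lang (A : BuchiAutomaton σ Q) : Set (ℕ → σ) :=
  A.LangFrom A.init

/-- The language of `A`, read as a coBüchi automaton. -/
def CoLang (A : BuchiAutomaton σ Q) : Set (ℕ → σ) :=
  {w | ∃ ρ, A.IsRunFrom A.init w ρ ∧ A.CoBuchiAcc w ρ}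

/-- `A` is deterministic: at most one outgoing transition per state and letter. -/
def Deterministic (A : BuchiAutomaton σ Q) : Prop :=
  ∀ p a q q', (p, a, q) ∈ A.trans → (p, a, q') ∈ A.trans → q = q'

/-- `FinRun A l p`: `l` is a finite run of `A` from the initial state, ending in
the state `p` (represented as the chronological list of its transitions). -/
inductive FinRun (A : BuchiAutomaton σ Q) : List (Q × σ × Q) → Q → Prop
  | nil : FinRun A [] A.init
  | snoc {l : List (Q × σ × Q)} {p : Q} {a : σ} {q : Q} :
      FinRun A l p → (p, a, q) ∈ A.trans → FinRun A (l ++ [(p, a, q)]) q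

/-- A resolver for `A`: a function from finite runs and letters to transitions,
such that on every finite run from the initial state ending in a state `p` and
every letter `a`, it outputs a transition on `a` with source `p`. -/
structure Resolver (A : BuchiAutomaton σ Q) where
  res : List (Q × σ × Q) → σ → Q × σ × Q
  res_valid : ∀ l p a, A.FinRun l p →
    (res l a).1 = p ∧ (res l a).2.1 = a ∧ res l a ∈ A.trans

/-- The history (finite run) built by a resolver after reading `n` letters of `w`. -/
def Resolver.hist {A : BuchiAutomaton σ Q} (r : Resolver A) (w : ℕ → σ) : ℕ → List (Q × σ × Q)
  | 0 => []
  | n + 1 => r.hist w n ++ [r.res (r.hist w n) (w n)]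

/-- The run induced by the resolver on `w` satisfies the Büchi condition. -/
def Resolver.InducedBuchiAcc {A : BuchiAutomaton σ Q} (r : Resolver A) (w : ℕ → σ) : Prop :=
  ∀ N, ∃ n, N ≤ n ∧ r.res (r.hist w n) (w n) ∈ A.sig

/-- The run induced by the resolver on `w` satisfies the coBüchi condition. -/
def Resolver.InducedCoBuchiAcc {A : BuchiAutomaton σ Q} (r : Resolver A) (w : ℕ → σ) : Prop :=
  ∃ N, ∀ n, N ≤ n → r.res (r.hist w n) (w n) ∉ A.sig

/-- `A` is history-deterministic (as a Büchi automaton). -/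
def HistoryDeterministic (A : BuchiAutomaton σ Q) : Prop :=
  ∃ r : Resolver A, ∀ w ∈ A.Lang, r.InducedBuchiAcc w

/-- `A` is history-deterministic (as a coBüchi automaton). -/
def CoHistoryDeterministic (A : BuchiAutomaton σ Q) : Prop :=
  ∃ r : Resolver A, ∀ w ∈ A.CoLang, r.InducedCoBuchiAcc w

end BuchiAutomaton

/-- The finite factor `w[m..n)` of the infinite word `w`, as a list. -/
def wordSegment {σ : Type} (w : ℕ → σ) (m n : ℕ) : List σ :=
  (List.range (n - m)).map fun i => w (m + i)

/-- `omegaPow X`: the infinite words that can be written as an infinite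
concatenation of finite words, each belonging to `X`. -/
def omegaPow {σ : Type} (X : Set (List σ)) : Set (ℕ → σ) :=
  {w | ∃ φ : ℕ → ℕ, φ 0 = 0 ∧ StrictMono φ ∧ ∀ k, wordSegment w (φ k) (φ (k + 1)) ∈ X}

/-- The alphabet `Σ = {a, b, c, 1, …, 6, r₁, …, r₆, y}` (with `num i` the digit
`i+1` and `res i` the reset letter `r_{i+1}`). -/
inductive Al : Type
  | a | b | c
  | num (i : Fin 6)
  | res (i : Fin 6)
  | y
deriving DecidableEq, Fintype

/-- The states of the classifier DFA. -/
inductive CSt : Type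
  | p | q | t | s | r
  | ell (i : Fin 6)
deriving DecidableEq, Fintype

/-- The (partial) transition function of the classifier. A digit `num i` belongs
to `E = {1,2,3}` iff `i.val < 3`, and to `F = {4,5,6}` otherwise. -/
def clStep : CSt → Al → Option CSt
  | .p, .b => some .p
  | .p, .num _ => some .p
  | .p, .y => some .p
  | .p, .a => some .q
  | .p, .c => some .t
  | .q, .a => some .q
  | .q, .num _ => some .p
  | .q, .y => some .p
  | .q, .b => some .r
  | .q, .c => some .s
  | .t, .c => some .t
  | .t, .b => some .p
  | .t, .a => some .q
  | .t, .num i => if i.val < 3 then some (.ell i) else some .p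
  | .t, .y => some .p
  | .s, .c => some .s
  | .s, .b => some .r
  | .s, .a => some .q
  | .s, .num i => if i.val < 3 then some (.ell i) else some .p
  | .s, .y => some .p
  | .r, .b => some .r
  | .r, .a => some .q
  | .r, .c => some .s
  | .r, .num i => if 3 ≤ i.val then some (.ell i) else some .p
  | .r, .y => some .p
  | _, _ => none

/-- The run of the classifier on a finite word, from a given state. -/
def clRun : CSt → List Al → Option CSt
  | c, [] => some c
  | c, l :: w =>
    match clStep c l with
    | some c' => clRun c' w
    | none => none

/-- The language `L_α` (for `α : Fin 6`, representing `L_{α+1}`): the finite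
words whose run in the classifier from `p` is defined and ends in `ℓ_α`. -/
def Lcl (α : Fin 6) : Set (List Al) :=
  {w | clRun .p w = some (.ell α)}

/-- `L_main = (Σ^* ⋃_{α≠β} (L_α ∪ {r_α}) L_β L_β Σ^* y)^ω`. -/
def LMain : Set (ℕ → Al) :=
  omegaPow {w | ∃ α β : Fin 6, α ≠ β ∧ ∃ u v₁ v₂ v₃ z : List Al,
    (v₁ ∈ Lcl α ∨ v₁ = [Al.res α]) ∧ v₂ ∈ Lcl β ∧ v₃ ∈ Lcl β ∧
    w = u ++ v₁ ++ v₂ ++ v₃ ++ z ++ [Al.y]}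

/-!
The classifier is governed by one deterministic *tracker* started at position `0`: a piece of
`L_α`, wherever it starts, can only end at a position where the tracker completes `α` (an
*event* labelled `α`, as is every reset letter `r_α`), and from a position where the tracker is
in `p` the pieces of `L_β` are exactly the stretches up to the next event, when that event is a
digit `β`. So `w ∈ L_main` iff `w` has
infinitely many `y` and, arbitrarily late, three consecutive events labelled `α, β, β` with
`α ≠ β`, the last two of them digits (a `Pattern`).

The automaton runs the tracker, remembers the label of the last event and whether the last two
events carried distinct labels (`5 · 6 · 2` states), and falls into one further state `wait` when
it sees a `Pattern`. It leaves `wait` only on `y`, by a significant transition that guesses the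
label of the last event. Every run on a word of `L_main` is therefore sent to `wait` infinitely
often. The resolver guesses the label correctly, so its run reenters `wait` only after a genuine
`Pattern`, which on a word outside `L_main` happens finitely often.
-/

section Segment

variable {σ : Type} (w : ℕ → σ)

theorem length_wordSegment (m n : ℕ) : (wordSegment w m n).length = n - m := by
  simp [wordSegment]

theorem wordSegment_self (m : ℕ) : wordSegment w m m = [] := by
  simp [wordSegment]

theorem wordSegment_singleton (m : ℕ) : wordSegment w m (m + 1) = [w m] := by
  simp [wordSegment]

theorem wordSegment_append {m k n : ℕ} (hmk : m ≤ k) (hkn : k ≤ n) :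
    wordSegment w m k ++ wordSegment w k n = wordSegment w m n := by
  obtain ⟨i, rfl⟩ := Nat.exists_eq_add_of_le hmk
  obtain ⟨j, rfl⟩ := Nat.exists_eq_add_of_le hkn
  simp [wordSegment, List.range_add, Nat.add_assoc, Nat.add_sub_add_left, Function.comp_def]

theorem wordSegment_succ {m n : ℕ} (h : m ≤ n) :
    wordSegment w m (n + 1) = wordSegment w m n ++ [w n] := by
  rw [← wordSegment_singleton, wordSegment_append w h n.le_succ]

theorem exists_wordSegment_eq_of_eq_append {m n : ℕ} {X Y : List σ} (hmn : m ≤ n)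
    (h : wordSegment w m n = X ++ Y) :
    ∃ k, m ≤ k ∧ k ≤ n ∧ wordSegment w m k = X ∧ wordSegment w k n = Y := by
  have hlen := congrArg List.length h
  rw [length_wordSegment, List.length_append] at hlen
  have hle : m + X.length ≤ n := by omega
  rw [← wordSegment_append w (Nat.le_add_right m X.length) hle] at h
  obtain ⟨hX, hY⟩ := List.append_inj h (by rw [length_wordSegment]; omega)
  exact ⟨_, Nat.le_add_right m X.length, hle, hX, hY⟩

theorem mem_omegaPow_of_forall_exists {X : Set (List σ)}
    (h : ∀ P, ∃ Q, P < Q ∧ wordSegment w P Q ∈ X) : w ∈ omegaPow X := by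
  choose g hlt hmem using h
  exact ⟨fun k => g^[k] 0, rfl, strictMono_nat_of_lt_succ fun k => by
    simpa only [Function.iterate_succ_apply'] using hlt _, fun k => by
    simpa only [Function.iterate_succ_apply'] using hmem _⟩

theorem eq_succ_of_wordSegment_eq_singleton {m n : ℕ} {x : σ} (h : wordSegment w m n = [x]) :
    n = m + 1 ∧ w m = x := by
  have hlen := congrArg List.length h
  rw [length_wordSegment, List.length_singleton] at hlen
  obtain rfl : n = m + 1 := by omega
  rw [wordSegment_singleton, List.singleton_inj] at h
  exact ⟨rfl, h⟩

theorem mem_omegaPow_infix_iff (O : Set (List σ)) (e : σ) :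
    w ∈ omegaPow {x | ∃ u v z, v ∈ O ∧ x = u ++ v ++ z ++ [e]} ↔
      (∀ N, ∃ j, N ≤ j ∧ w j = e) ∧ ∀ N, ∃ m n, N ≤ m ∧ m ≤ n ∧ wordSegment w m n ∈ O := by
  constructor
  · rintro ⟨φ, -, hφ, hblock⟩
    have hN : ∀ N, N ≤ φ N ∧ φ N ≤ φ (N + 1) := fun N => ⟨hφ.le_apply, (hφ N.lt_succ_self).le⟩
    refine ⟨fun N => ?_, fun N => ?_⟩ <;> obtain ⟨u, v, z, hv, hx⟩ := hblock N
    · obtain ⟨j, hj, -, -, hy⟩ := exists_wordSegment_eq_of_eq_append w (hN N).2 hx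
      exact ⟨j, (hN N).1.trans hj, (eq_succ_of_wordSegment_eq_singleton w hy).2⟩
    · simp only [List.append_assoc] at hx
      obtain ⟨m, hm, hmn', -, hx⟩ := exists_wordSegment_eq_of_eq_append w (hN N).2 hx
      obtain ⟨n, hmn, -, hv', -⟩ := exists_wordSegment_eq_of_eq_append w hmn' hx
      exact ⟨m, n, (hN N).1.trans hm, hmn, hv' ▸ hv⟩
  · rintro ⟨he, hO⟩
    refine mem_omegaPow_of_forall_exists w fun P => ?_
    obtain ⟨m, n, hPm, hmn, hmem⟩ := hO P
    obtain ⟨j, hnj, hj⟩ := he n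
    refine ⟨j + 1, by omega, wordSegment w P m, wordSegment w m n, wordSegment w n j, hmem, ?_⟩
    rw [← hj, ← wordSegment_singleton, wordSegment_append w hPm hmn,
      wordSegment_append w (hPm.trans hmn) hnj, wordSegment_append w (by omega) (by omega)]

end Segment

theorem clRun_append (c : CSt) (u v : List Al) :
    clRun c (u ++ v) = (clRun c u).bind (clRun · v) := by
  induction u generalizing c with
  | nil => rfl
  | cons l u ih =>
    simp only [List.cons_append, clRun]
    cases clStep c l with
    | none => rfl
    | some c' => exact ih c'

theorem clRun_singleton (c : CSt) (l : Al) : clRun c [l] = clStep c l := by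
  simp only [clRun]
  cases clStep c l <;> rfl

theorem clRun_concat (c : CSt) (u : List Al) (l : Al) :
    clRun c (u ++ [l]) = (clRun c u).bind (clStep · l) := by
  simp [clRun_append, clRun_singleton]

theorem clStep_ell (d : Fin 6) (l : Al) : clStep (.ell d) l = none := by
  cases l <;> rfl

namespace LMain

variable {w : ℕ → Al}

/-- The classifier restricted to its states `p, q, t, s, r` and made total: wherever the
classifier dies or reaches some `ℓ`, the tracker restarts in `p`. -/
inductive Tracker : Type
  | p | q | t | s | r
deriving DecidableEq

instance : Fintype Tracker :=
  Fintype.ofList [.p, .q, .t, .s, .r] fun τ => by cases τ <;> simp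

namespace Tracker

def toCSt : Tracker → CSt
  | p => .p | q => .q | t => .t | s => .s | r => .r

def completes : Tracker → Fin 6 → Bool
  | t, d => decide (d.val < 3)
  | s, d => decide (d.val < 3)
  | r, d => decide (3 ≤ d.val)
  | _, _ => false

def step : Tracker → Al → Tracker
  | _, .a => q
  | p, .b => p
  | t, .b => p
  | _, .b => r
  | p, .c => t
  | t, .c => t
  | _, .c => s
  | _, _ => p

def event (τ : Tracker) : Al → Option (Fin 6)
  | .res e => some e
  | .num d => if τ.completes d then some d else none
  | _ => none

theorem step_eq_p_of_event {τ : Tracker} {l : Al} {d : Fin 6} (h : τ.event l = some d) :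
    τ.step l = p := by
  revert τ l d; decide

theorem clStep_toCSt_of_event_eq_none {τ : Tracker} {l : Al} (h : τ.event l = none) :
    clStep τ.toCSt l = some (τ.step l).toCSt := by
  revert τ l; decide

theorem clStep_toCSt_eq_ell_iff {τ : Tracker} {l : Al} {d : Fin 6} :
    clStep τ.toCSt l = some (.ell d) ↔ l = .num d ∧ τ.completes d := by
  revert τ l d; decide

theorem eq_ell_of_clStep_toCSt {τ : Tracker} {l : Al} {d : Fin 6} {x : CSt}
    (h : τ.event l = some d) (hx : clStep τ.toCSt l = some x) : x = .ell d := by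
  revert τ l d x; decide

end Tracker

def track (w : ℕ → Al) : ℕ → Tracker
  | 0 => .p
  | i + 1 => (track w i).step (w i)

def event (w : ℕ → Al) (i : ℕ) : Option (Fin 6) :=
  (track w i).event (w i)

def DigitEvent (w : ℕ → Al) (i : ℕ) (d : Fin 6) : Prop :=
  w i = .num d ∧ (track w i).completes d = true

def Quiet (w : ℕ → Al) (a b : ℕ) : Prop :=
  ∀ j, a ≤ j → j < b → event w j = none

theorem DigitEvent.event_eq {i : ℕ} {d : Fin 6} (h : DigitEvent w i d) : event w i = some d := by
  simp [event, Tracker.event, h.1, h.2]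

theorem track_succ_of_event {i : ℕ} {d : Fin 6} (h : event w i = some d) :
    track w (i + 1) = .p :=
  Tracker.step_eq_p_of_event h

theorem track_succ_of_eq_y {i : ℕ} (h : w i = .y) : track w (i + 1) = .p := by
  simp only [track, h]
  cases track w i <;> rfl

theorem event_eq_some_iff {i : ℕ} {d : Fin 6} :
    event w i = some d ↔ w i = .res d ∨ DigitEvent w i d := by
  unfold event DigitEvent
  cases w i with
  | num d' =>
    by_cases hc : (track w i).completes d' <;> simp only [Tracker.event, hc] <;> grind
  | _ => simp [Tracker.event]

theorem event_eq_none_of_eq_y {i : ℕ} (h : w i = .y) : event w i = none := by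
  simp [event, h, Tracker.event]

theorem Quiet.mono {a b a' b' : ℕ} (h : Quiet w a b) (ha : a ≤ a') (hb : b' ≤ b) :
    Quiet w a' b' :=
  fun j h₁ h₂ => h j (ha.trans h₁) (h₂.trans_le hb)

theorem clRun_wordSegment_succ (c : CSt) {m n : ℕ} (h : m ≤ n) :
    clRun c (wordSegment w m (n + 1)) = (clRun c (wordSegment w m n)).bind (clStep · (w n)) := by
  rw [wordSegment_succ w h, clRun_concat]

theorem clRun_wordSegment_of_quiet {a b : ℕ} (ha : track w a = .p) (hab : a ≤ b)
    (hq : Quiet w a b) : clRun .p (wordSegment w a b) = some (track w b).toCSt := by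
  induction b, hab using Nat.le_induction with
  | base => rw [wordSegment_self, ha]; rfl
  | succ b hab ih =>
    rw [clRun_wordSegment_succ _ hab, ih (hq.mono le_rfl b.le_succ), Option.bind_some,
      Tracker.clStep_toCSt_of_event_eq_none (hq b hab b.lt_succ_self)]
    rfl

/-- Once the classifier has read a letter carrying an event it has either died or reached a
final state `ℓ`, so it dies on the next letter. -/
theorem quiet_of_clRun_wordSegment_isSome {a b : ℕ} (ha : track w a = .p) (hab : a ≤ b)
    (h : (clRun .p (wordSegment w a (b + 1))).isSome) : Quiet w a b := by
  induction b, hab using Nat.le_induction with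
  | base => intro j h₁ h₂; omega
  | succ b hab ih =>
    rw [clRun_wordSegment_succ _ (by omega)] at h
    obtain ⟨x, hx⟩ : ∃ x, clRun .p (wordSegment w a (b + 1)) = some x := by
      cases hx : clRun .p (wordSegment w a (b + 1)) with
      | none => rw [hx] at h; exact absurd h (by simp)
      | some x => exact ⟨x, rfl⟩
    rw [hx, Option.bind_some] at h
    have hq := ih (by rw [hx]; rfl)
    have hb : event w b = none := by
      cases he : event w b with
      | none => rfl
      | some d =>
        rw [clRun_wordSegment_succ _ hab, clRun_wordSegment_of_quiet ha hab hq,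
          Option.bind_some] at hx
        rw [Tracker.eq_ell_of_clStep_toCSt he hx, clStep_ell] at h
        exact absurd h (by simp)
    intro j h₁ h₂
    rcases Nat.lt_succ_iff_lt_or_eq.mp h₂ with h₂ | rfl
    exacts [hq j h₁ h₂, hb]

theorem wordSegment_mem_Lcl_iff {a b : ℕ} {β : Fin 6} (ha : track w a = .p) (hab : a ≤ b) :
    wordSegment w a (b + 1) ∈ Lcl β ↔ Quiet w a b ∧ DigitEvent w b β := by
  have hrun : ∀ hq : Quiet w a b, clRun .p (wordSegment w a (b + 1)) =
      clStep (track w b).toCSt (w b) := fun hq => by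
    rw [clRun_wordSegment_succ _ hab, clRun_wordSegment_of_quiet ha hab hq, Option.bind_some]
  constructor
  · intro h
    have hq := quiet_of_clRun_wordSegment_isSome ha hab (by rw [show clRun _ _ = _ from h]; rfl)
    exact ⟨hq, Tracker.clStep_toCSt_eq_ell_iff.mp ((hrun hq).symm.trans h)⟩
  · rintro ⟨hq, hd⟩
    exact (hrun hq).trans (Tracker.clStep_toCSt_eq_ell_iff.mpr hd)

/-- Invariant relating a classifier run started at an arbitrary position to the tracker, which
started at position `0`. -/
def Lags (x : CSt) (τ : Tracker) : Prop :=
  x = τ.toCSt ∨ x = .p ∨ (x = .t ∧ (τ = .t ∨ τ = .s))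

instance : DecidableRel Lags := fun _ _ => by unfold Lags; infer_instance

theorem Lags.step {x y : CSt} {τ : Tracker} {l : Al} (h : Lags x τ) (hy : clStep x l = some y) :
    (∃ d, y = .ell d) ∨ Lags y (τ.step l) := by
  revert x y τ l; decide

theorem Lags.digit_of_clStep_eq_ell {x : CSt} {τ : Tracker} {l : Al} {d : Fin 6} (h : Lags x τ)
    (hy : clStep x l = some (.ell d)) : l = .num d ∧ τ.completes d = true := by
  revert x τ l d; decide

theorem lags_clRun_wordSegment {m k : ℕ} {x : CSt} (hmk : m ≤ k)
    (h : clRun .p (wordSegment w m k) = some x) : (∃ d, x = .ell d) ∨ Lags x (track w k) := by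
  induction k, hmk using Nat.le_induction generalizing x with
  | base =>
    rw [wordSegment_self] at h
    cases h
    exact .inr (.inr (.inl rfl))
  | succ k hmk ih =>
    rw [clRun_wordSegment_succ _ hmk] at h
    obtain ⟨x', hx', hstep⟩ := Option.bind_eq_some_iff.mp h
    rcases ih hx' with ⟨d, rfl⟩ | hlags
    · rw [clStep_ell] at hstep; cases hstep
    · exact hlags.step hstep

theorem digitEvent_of_wordSegment_mem_Lcl {m b : ℕ} {α : Fin 6} (hmb : m ≤ b)
    (h : wordSegment w m (b + 1) ∈ Lcl α) : DigitEvent w b α := by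
  obtain ⟨x, hx, hstep⟩ := Option.bind_eq_some_iff.mp
    ((clRun_wordSegment_succ (w := w) .p hmb).symm.trans h)
  rcases lags_clRun_wordSegment hmb hx with ⟨d, rfl⟩ | hlags
  · rw [clStep_ell] at hstep; cases hstep
  · exact hlags.digit_of_clStep_eq_ell hstep

/-- The piece starts at the last position `≤ b` where the tracker is back in `p`. -/
theorem exists_wordSegment_mem_Lcl_of_digitEvent {a b : ℕ} {β : Fin 6} (ha : track w a = .p)
    (hab : a ≤ b) (h : DigitEvent w b β) :
    ∃ m, a ≤ m ∧ m ≤ b ∧ wordSegment w m (b + 1) ∈ Lcl β := by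
  classical
  set P : ℕ → Prop := fun m => track w m = .p
  set m := Nat.findGreatest P b
  have hm : track w m = .p := Nat.findGreatest_spec (P := P) hab ha
  have hq : Quiet w m b := by
    intro j hj₁ hj₂
    by_contra hj
    obtain ⟨d, hd⟩ := Option.ne_none_iff_exists'.mp hj
    exact Nat.findGreatest_is_greatest (P := P) (n := b) (k := j + 1) (by omega) (by omega)
      (track_succ_of_event hd)
  exact ⟨m, Nat.le_findGreatest (P := P) hab ha, Nat.findGreatest_le b,
    (wordSegment_mem_Lcl_iff hm (Nat.findGreatest_le b)).mpr ⟨hq, h⟩⟩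

def Infix : Set (List Al) :=
  {v | ∃ α β : Fin 6, α ≠ β ∧ ∃ v₁ v₂ v₃ : List Al,
    (v₁ ∈ Lcl α ∨ v₁ = [Al.res α]) ∧ v₂ ∈ Lcl β ∧ v₃ ∈ Lcl β ∧ v = v₁ ++ v₂ ++ v₃}

theorem eq_omegaPow_infix :
    LMain = omegaPow {x | ∃ u v z, v ∈ Infix ∧ x = u ++ v ++ z ++ [Al.y]} := by
  unfold LMain Infix
  congr 1
  ext x
  constructor
  · rintro ⟨α, β, hne, u, v₁, v₂, v₃, z, hv₁, hv₂, hv₃, rfl⟩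
    exact ⟨u, v₁ ++ v₂ ++ v₃, z, ⟨α, β, hne, v₁, v₂, v₃, hv₁, hv₂, hv₃, rfl⟩, by simp⟩
  · rintro ⟨u, _, z, ⟨α, β, hne, v₁, v₂, v₃, hv₁, hv₂, hv₃, rfl⟩, rfl⟩
    exact ⟨α, β, hne, u, v₁, v₂, v₃, z, hv₁, hv₂, hv₃, by simp⟩

/-- The trace of an infix in `(L_α ∪ {r_α}) L_β L_β` on the event sequence: three consecutive
events labelled `α, β, β`, the last two of them completing `L_β` pieces. -/
structure Pattern (w : ℕ → Al) (α β : Fin 6) (e₀ e₁ e₂ : ℕ) : Prop where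
  ne : α ≠ β
  first : event w e₀ = some α
  second : DigitEvent w e₁ β
  third : DigitEvent w e₂ β
  lt₀₁ : e₀ < e₁
  lt₁₂ : e₁ < e₂
  quiet₀₁ : Quiet w (e₀ + 1) e₁
  quiet₁₂ : Quiet w (e₁ + 1) e₂

theorem exists_eq_succ_of_wordSegment_mem_Lcl {a b : ℕ} {β : Fin 6}
    (h : wordSegment w a b ∈ Lcl β) : ∃ e, b = e + 1 ∧ a ≤ e := by
  have hlen : 0 < (wordSegment w a b).length :=
    List.length_pos_iff.mpr fun h' => by rw [h'] at h; cases h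
  rw [length_wordSegment] at hlen
  exact ⟨b - 1, by omega, by omega⟩

theorem exists_pattern_of_wordSegment_mem_Infix {m n : ℕ} (hmn : m ≤ n)
    (h : wordSegment w m n ∈ Infix) : ∃ α β e₀ e₁ e₂, m ≤ e₀ ∧ Pattern w α β e₀ e₁ e₂ := by
  obtain ⟨α, β, hne, v₁, v₂, v₃, hv₁, hv₂, hv₃, hv⟩ := h
  rw [List.append_assoc] at hv
  obtain ⟨j₁, hmj₁, hj₁n, h₁, h₂₃⟩ := exists_wordSegment_eq_of_eq_append w hmn hv
  obtain ⟨j₂, hj₁j₂, -, h₂, h₃⟩ := exists_wordSegment_eq_of_eq_append w hj₁n h₂₃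
  have hfirst : ∃ e₀, j₁ = e₀ + 1 ∧ m ≤ e₀ ∧ event w e₀ = some α := by
    rcases hv₁ with hv₁ | rfl
    · obtain ⟨e₀, rfl, hme₀⟩ := exists_eq_succ_of_wordSegment_mem_Lcl (h₁ ▸ hv₁)
      exact ⟨e₀, rfl, hme₀, (digitEvent_of_wordSegment_mem_Lcl hme₀ (h₁ ▸ hv₁)).event_eq⟩
    · obtain ⟨rfl, hres⟩ := eq_succ_of_wordSegment_eq_singleton w h₁
      exact ⟨m, rfl, le_rfl, event_eq_some_iff.mpr (.inl hres)⟩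
  obtain ⟨e₀, rfl, hme₀, he₀⟩ := hfirst
  obtain ⟨e₁, rfl, he₀e₁⟩ := exists_eq_succ_of_wordSegment_mem_Lcl (h₂ ▸ hv₂)
  obtain ⟨e₂, rfl, he₁e₂⟩ := exists_eq_succ_of_wordSegment_mem_Lcl (h₃ ▸ hv₃)
  obtain ⟨hq₁, hd₁⟩ := (wordSegment_mem_Lcl_iff (track_succ_of_event he₀) he₀e₁).mp (h₂ ▸ hv₂)
  obtain ⟨hq₂, hd₂⟩ :=
    (wordSegment_mem_Lcl_iff (track_succ_of_event hd₁.event_eq) he₁e₂).mp (h₃ ▸ hv₃)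
  exact ⟨α, β, e₀, e₁, e₂, hme₀, hne, he₀, hd₁, hd₂, by omega, by omega, hq₁, hq₂⟩

theorem exists_wordSegment_mem_Infix_of_pattern {a e₀ e₁ e₂ : ℕ} {α β : Fin 6}
    (ha : track w a = .p) (hae₀ : a ≤ e₀) (h : Pattern w α β e₀ e₁ e₂) :
    ∃ m n, a ≤ m ∧ m ≤ n ∧ wordSegment w m n ∈ Infix := by
  have hfirst : ∃ m, a ≤ m ∧ m ≤ e₀ ∧
      (wordSegment w m (e₀ + 1) ∈ Lcl α ∨ wordSegment w m (e₀ + 1) = [Al.res α]) := by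
    rcases event_eq_some_iff.mp h.first with hres | hd
    · exact ⟨e₀, hae₀, le_rfl, .inr (by rw [wordSegment_singleton, hres])⟩
    · obtain ⟨m, ham, hme₀, hm⟩ := exists_wordSegment_mem_Lcl_of_digitEvent ha hae₀ hd
      exact ⟨m, ham, hme₀, .inl hm⟩
  obtain ⟨m, ham, hme₀, hv₁⟩ := hfirst
  have hv₂ := (wordSegment_mem_Lcl_iff (track_succ_of_event h.first) h.lt₀₁).mpr
    ⟨h.quiet₀₁, h.second⟩
  have hv₃ := (wordSegment_mem_Lcl_iff (track_succ_of_event h.second.event_eq) h.lt₁₂).mpr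
    ⟨h.quiet₁₂, h.third⟩
  have := h.lt₀₁
  have := h.lt₁₂
  refine ⟨m, e₂ + 1, ham, by omega, α, β, h.ne, _, _, _, hv₁, hv₂, hv₃, ?_⟩
  rw [wordSegment_append w (by omega) (by omega), wordSegment_append w (by omega) (by omega)]

theorem mem_iff_pattern : w ∈ LMain ↔ (∀ N, ∃ j, N ≤ j ∧ w j = .y) ∧
    ∀ N, ∃ α β e₀ e₁ e₂, N ≤ e₀ ∧ Pattern w α β e₀ e₁ e₂ := by
  rw [eq_omegaPow_infix, mem_omegaPow_infix_iff]
  refine and_congr_right fun hy => ⟨fun hocc N => ?_, fun hpat N => ?_⟩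
  · obtain ⟨m, n, hNm, hmn, hmem⟩ := hocc N
    obtain ⟨α, β, e₀, e₁, e₂, hme₀, hpat⟩ := exists_pattern_of_wordSegment_mem_Infix hmn hmem
    exact ⟨α, β, e₀, e₁, e₂, hNm.trans hme₀, hpat⟩
  · obtain ⟨j, hNj, hj⟩ := hy N
    obtain ⟨α, β, e₀, e₁, e₂, hje₀, hpat⟩ := hpat (j + 1)
    obtain ⟨m, n, hjm, hmn, hmem⟩ :=
      exists_wordSegment_mem_Infix_of_pattern (track_succ_of_eq_y hj) hje₀ hpat
    exact ⟨m, n, by omega, hmn, hmem⟩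

/-- `wait`: an infix in `(L_α ∪ {r_α}) L_β L_β` has just been read; wait for the next `y`.
`watch τ γ f`: `τ` tracks the classifier, `γ` is the label of the last event, and `f` says that
this event completed an `L_γ` piece right after an event with a label other than `γ`. -/
inductive State : Type
  | wait
  | watch (τ : Tracker) (γ : Fin 6) (f : Bool)
deriving DecidableEq, Fintype

theorem card_state : Fintype.card State = 61 := by decide

def State.next : State → Al → State
  | wait, _ => wait
  | watch τ γ f, .num d =>
    if τ.completes d then (if f ∧ γ = d then wait else watch .p d (γ ≠ d)) else watch .p γ f
  | watch _ _ _, .res e => watch .p e false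
  | watch τ γ f, l => watch (τ.step l) γ f

/-- The only nondeterminism: on `y` in `wait` the automaton guesses the label of the last event. -/
def monitor : BuchiAutomaton Al State where
  init := .wait
  trans := {t | if t.1 = .wait ∧ t.2.1 = .y then ∃ γ, t.2.2 = .watch .p γ false
    else t.2.2 = t.1.next t.2.1}
  sig := {t | t.1 = .wait ∧ t.2.1 = .y ∧ ∃ γ, t.2.2 = .watch .p γ false}
  sig_sub := fun t ⟨h₁, h₂, h₃⟩ => by simp [h₁, h₂, h₃]

namespace State

theorem next_watch_of_event_eq_none {τ : Tracker} {γ : Fin 6} {f : Bool} {l : Al}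
    (h : τ.event l = none) : (watch τ γ f).next l = watch (τ.step l) γ f := by
  cases l with
  | num d => simp_all [next, Tracker.event, Tracker.step]
  | res e => cases h
  | _ => rfl

theorem next_watch_of_completes {τ : Tracker} {γ : Fin 6} {f : Bool} {d : Fin 6}
    (h : τ.completes d = true) :
    (watch τ γ f).next (.num d) = if f ∧ γ = d then wait else watch .p d (γ ≠ d) := by
  simp [next, h]

theorem step_eq_of_next_watch {τ τ' : Tracker} {γ γ' : Fin 6} {f f' : Bool} {l : Al}
    (h : (watch τ γ f).next l = watch τ' γ' f') : τ' = τ.step l := by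
  cases l <;> simp only [next] at h <;> (try split_ifs at h) <;> cases h <;> cases τ <;> rfl

end State

section Run

variable {ρ : ℕ → State} (hρ : monitor.IsRunFrom .wait w ρ)
include hρ

theorem run_succ_of_watch {i : ℕ} {τ : Tracker} {γ : Fin 6} {f : Bool} (h : ρ i = .watch τ γ f) :
    ρ (i + 1) = (State.watch τ γ f).next (w i) := by
  have := hρ.2 i
  simpa [monitor, h] using this

theorem run_succ_of_wait {i : ℕ} (h : ρ i = .wait) (hy : w i ≠ .y) : ρ (i + 1) = .wait := by
  have := hρ.2 i
  simpa [monitor, h, hy, State.next] using this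

theorem run_exists_succ_of_reset {i : ℕ} (h : ρ i = .wait) (hy : w i = .y) :
    ∃ γ, ρ (i + 1) = .watch .p γ false := by
  have := hρ.2 i
  simpa [monitor, h, hy] using this

theorem run_mem_sig_iff {i : ℕ} : (ρ i, w i, ρ (i + 1)) ∈ monitor.sig ↔ ρ i = .wait ∧ w i = .y :=
  ⟨fun h => ⟨h.1, h.2.1⟩, fun h => ⟨h.1, h.2, run_exists_succ_of_reset hρ h.1 h.2⟩⟩

theorem run_track_eq {i : ℕ} {τ : Tracker} {γ : Fin 6} {f : Bool} (h : ρ i = .watch τ γ f) :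
    τ = track w i := by
  induction i generalizing τ γ f with
  | zero => rw [hρ.1] at h; cases h
  | succ i ih =>
    cases hi : ρ i with
    | wait =>
      by_cases hy : w i = .y
      · obtain ⟨γ', hγ'⟩ := run_exists_succ_of_reset hρ hi hy
        rw [hγ'] at h
        cases h
        exact (track_succ_of_eq_y hy).symm
      · rw [run_succ_of_wait hρ hi hy] at h; cases h
    | watch τ' γ' f' =>
      rw [run_succ_of_watch hρ hi] at h
      rw [State.step_eq_of_next_watch h, ih hi]
      rfl

theorem run_succ_of_event_eq_none {i : ℕ} {τ : Tracker} {γ : Fin 6} {f : Bool}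
    (h : ρ i = .watch τ γ f) (he : event w i = none) :
    ρ (i + 1) = .watch (track w (i + 1)) γ f := by
  rw [run_succ_of_watch hρ h, run_track_eq hρ h]
  exact State.next_watch_of_event_eq_none he

theorem run_succ_of_res {i : ℕ} {τ : Tracker} {γ : Fin 6} {f : Bool} {d : Fin 6}
    (h : ρ i = .watch τ γ f) (hres : w i = .res d) : ρ (i + 1) = .watch .p d false := by
  rw [run_succ_of_watch hρ h, hres]
  rfl

theorem run_succ_of_digitEvent {i : ℕ} {τ : Tracker} {γ : Fin 6} {f : Bool} {d : Fin 6}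
    (h : ρ i = .watch τ γ f) (hd : DigitEvent w i d) :
    ρ (i + 1) = if f ∧ γ = d then .wait else .watch .p d (γ ≠ d) := by
  rw [run_succ_of_watch hρ h, run_track_eq hρ h, hd.1, State.next_watch_of_completes hd.2]

theorem run_succ_of_event_eq_some {i : ℕ} {τ : Tracker} {γ : Fin 6} {f : Bool} {d : Fin 6}
    (h : ρ i = .watch τ γ f) (he : event w i = some d) :
    ρ (i + 1) = .wait ∨ ∃ f', ρ (i + 1) = .watch .p d f' := by
  rcases event_eq_some_iff.mp he with hres | hd
  · exact .inr ⟨false, run_succ_of_res hρ h hres⟩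
  · rw [run_succ_of_digitEvent hρ h hd]
    split_ifs
    exacts [.inl rfl, .inr ⟨_, rfl⟩]

theorem run_watch_of_quiet {a b : ℕ} {τ : Tracker} {γ : Fin 6} {f : Bool}
    (h : ρ a = .watch τ γ f) (hab : a ≤ b) (hq : Quiet w a b) : ∃ τ', ρ b = .watch τ' γ f := by
  induction b, hab using Nat.le_induction with
  | base => exact ⟨τ, h⟩
  | succ b hab ih =>
    obtain ⟨τ', hτ'⟩ := ih (hq.mono le_rfl b.le_succ)
    exact ⟨_, run_succ_of_event_eq_none hρ hτ' (hq b hab b.lt_succ_self)⟩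

theorem run_wait_of_forall_ne_y {a b : ℕ} (h : ρ a = .wait) (hab : a ≤ b)
    (hy : ∀ k, a ≤ k → k < b → w k ≠ .y) : ρ b = .wait := by
  induction b, hab using Nat.le_induction with
  | base => exact h
  | succ b hab ih =>
    exact run_succ_of_wait hρ (ih fun k h₁ h₂ => hy k h₁ (by omega)) (hy b hab b.lt_succ_self)

theorem exists_run_eq_wait_of_pattern {α β : Fin 6} {e₀ e₁ e₂ : ℕ}
    (hpat : Pattern w α β e₀ e₁ e₂) : ∃ i, e₀ ≤ i ∧ i ≤ e₂ + 1 ∧ ρ i = .wait := by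
  have := hpat.lt₀₁
  have := hpat.lt₁₂
  rcases h₀ : ρ e₀ with _ | ⟨τ₀, γ₀, f₀⟩
  · exact ⟨e₀, le_rfl, by omega, h₀⟩
  rcases run_succ_of_event_eq_some hρ h₀ hpat.first with h₁ | ⟨f₁, h₁⟩
  · exact ⟨e₀ + 1, by omega, by omega, h₁⟩
  obtain ⟨τ₁, h₁⟩ := run_watch_of_quiet hρ h₁ hpat.lt₀₁ hpat.quiet₀₁
  have h₂ := run_succ_of_digitEvent hρ h₁ hpat.second
  rw [if_neg (fun h => hpat.ne h.2), decide_eq_true hpat.ne] at h₂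
  obtain ⟨τ₂, h₂⟩ := run_watch_of_quiet hρ h₂ hpat.lt₁₂ hpat.quiet₁₂
  exact ⟨e₂ + 1, by omega, le_rfl, by simpa using run_succ_of_digitEvent hρ h₂ hpat.third⟩

theorem run_buchiAcc_of_mem_LMain (hw : w ∈ LMain) : monitor.BuchiAcc w ρ := by
  classical
  obtain ⟨hy, hpat⟩ := mem_iff_pattern.mp hw
  intro N
  obtain ⟨α, β, e₀, e₁, e₂, hN, hp⟩ := hpat N
  obtain ⟨i, hi, -, hwait⟩ := exists_run_eq_wait_of_pattern hρ hp
  have hex := hy i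
  obtain ⟨hij, hj⟩ := Nat.find_spec hex
  have hwait' := run_wait_of_forall_ne_y hρ hwait hij fun k h₁ h₂ hk =>
    Nat.find_min hex h₂ ⟨h₁, hk⟩
  exact ⟨Nat.find hex, by omega, (run_mem_sig_iff hρ).mpr ⟨hwait', hj⟩⟩

theorem run_digitEvent_of_succ_eq_wait {e : ℕ} {τ : Tracker} {γ : Fin 6} {f : Bool}
    (h : ρ e = .watch τ γ f) (hsucc : ρ (e + 1) = .wait) : f = true ∧ DigitEvent w e γ := by
  cases he : event w e with
  | none => cases hsucc.symm.trans (run_succ_of_event_eq_none hρ h he)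
  | some d =>
    rcases event_eq_some_iff.mp he with hres | hd
    · cases hsucc.symm.trans (run_succ_of_res hρ h hres)
    · rw [run_succ_of_digitEvent hρ h hd] at hsucc
      split_ifs at hsucc with hfd
      exact ⟨hfd.1, hfd.2 ▸ hd⟩

theorem exists_flagged_digitEvent_before_wait {a b : ℕ} (ha : ρ a = .wait) (hy : w a = .y)
    (hab : a < b) (hb : ρ b = .wait) :
    ∃ e τ γ, a < e ∧ e < b ∧ ρ e = .watch τ γ true ∧ DigitEvent w e γ := by
  classical
  have hex : ∃ k, a < k ∧ ρ k = .wait := ⟨b, hab, hb⟩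
  obtain ⟨hak, hk⟩ := Nat.find_spec hex
  obtain ⟨γ₀, h₁⟩ := run_exists_succ_of_reset hρ ha hy
  obtain ⟨e, he⟩ : ∃ e, Nat.find hex = e + 1 := Nat.exists_eq_succ_of_ne_zero (by omega)
  have hae : a < e := by
    by_contra
    obtain rfl : e = a := by omega
    rw [he, h₁] at hk
    cases hk
  rcases hρe : ρ e with _ | ⟨τ, γ, f⟩
  · exact absurd ⟨hae, hρe⟩ (Nat.find_min hex (by omega))
  obtain ⟨rfl, hd⟩ := run_digitEvent_of_succ_eq_wait hρ hρe (he ▸ hk)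
  have := Nat.find_min' hex ⟨hab, hb⟩
  exact ⟨e, τ, γ, hae, by omega, hρe, hd⟩

end Run

/-- The label of the last event strictly before position `i` (junk value `0` if there is none). -/
def lastLabel (w : ℕ → Al) : ℕ → Fin 6
  | 0 => 0
  | i + 1 => (event w i).getD (lastLabel w i)

def scanLetter (x : Tracker × Fin 6) (l : Al) : Tracker × Fin 6 :=
  (x.1.step l, (x.1.event l).getD x.2)

theorem foldl_scanLetter_wordSegment (w : ℕ → Al) (n : ℕ) :
    (wordSegment w 0 n).foldl scanLetter (.p, 0) = (track w n, lastLabel w n) := by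
  induction n with
  | zero => rfl
  | succ n ih => rw [wordSegment_succ w n.zero_le, List.foldl_append, ih]; rfl

theorem exists_last_event {a b : ℕ} {d : Fin 6} (ha : event w a = some d) (hab : a < b) :
    ∃ e, a ≤ e ∧ e < b ∧ event w e = some (lastLabel w b) ∧ Quiet w (e + 1) b := by
  induction b, hab using Nat.le_induction with
  | base => exact ⟨a, le_rfl, a.lt_succ_self, by simp [lastLabel, ha], fun j h₁ h₂ => by omega⟩
  | succ b hab ih =>
    cases hb : event w b with
    | none =>
      obtain ⟨e, hae, heb, he, hq⟩ := ih
      refine ⟨e, hae, by omega, by simp [lastLabel, hb, he], fun j h₁ h₂ => ?_⟩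
      rcases Nat.lt_succ_iff_lt_or_eq.mp h₂ with h₂ | rfl
      exacts [hq j h₁ h₂, hb]
    | some d' =>
      exact ⟨b, by omega, b.lt_succ_self, by simp [lastLabel, hb], fun j h₁ h₂ => by omega⟩

def lastTarget (hist : List (State × Al × State)) : State :=
  (hist.getLast?.map fun t => t.2.2).getD .wait

theorem lastTarget_concat (hist : List (State × Al × State)) (t : State × Al × State) :
    lastTarget (hist ++ [t]) = t.2.2 := by
  simp [lastTarget]

def resolve (hist : List (State × Al × State)) (l : Al) : State × Al × State :=
  if lastTarget hist = .wait ∧ l = .y then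
    (lastTarget hist, l, .watch .p ((hist.map fun t => t.2.1).foldl scanLetter (.p, 0)).2 false)
  else (lastTarget hist, l, (lastTarget hist).next l)

theorem resolve_fst (hist : List (State × Al × State)) (l : Al) :
    (resolve hist l).1 = lastTarget hist := by
  unfold resolve; split_ifs <;> rfl

theorem resolve_snd_fst (hist : List (State × Al × State)) (l : Al) : (resolve hist l).2.1 = l := by
  unfold resolve; split_ifs <;> rfl

theorem resolve_mem_trans (hist : List (State × Al × State)) (l : Al) :
    resolve hist l ∈ monitor.trans := by
  unfold resolve
  split_ifs with h <;> simp [monitor, h]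

theorem lastTarget_of_finRun {hist : List (State × Al × State)} {p : State}
    (h : monitor.FinRun hist p) :
    lastTarget hist = p := by
  induction h with
  | nil => rfl
  | snoc => exact lastTarget_concat _ _

def resolver : monitor.Resolver where
  res := resolve
  res_valid hist _ l h :=
    ⟨(resolve_fst hist l).trans (lastTarget_of_finRun h), resolve_snd_fst hist l,
      resolve_mem_trans hist l⟩

def resolverRun (w : ℕ → Al) (n : ℕ) : State :=
  lastTarget (resolver.hist w n)

theorem resolver_res_hist (n : ℕ) :
    resolver.res (resolver.hist w n) (w n) = (resolverRun w n, w n, resolverRun w (n + 1)) :=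
  Prod.ext (resolve_fst _ _) (Prod.ext (resolve_snd_fst _ _) (lastTarget_concat _ _).symm)

theorem isRunFrom_resolverRun : monitor.IsRunFrom .wait w (resolverRun w) :=
  ⟨rfl, fun n => resolver_res_hist n ▸ resolve_mem_trans _ _⟩

theorem map_hist_eq_wordSegment (n : ℕ) :
    (resolver.hist w n).map (fun t => t.2.1) = wordSegment w 0 n := by
  induction n with
  | zero => rfl
  | succ n ih =>
    rw [BuchiAutomaton.Resolver.hist, List.map_append, ih, wordSegment_succ w n.zero_le,
      resolver_res_hist]
    rfl

theorem resolverRun_succ_of_reset {n : ℕ} (h : resolverRun w n = .wait) (hy : w n = .y) :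
    resolverRun w (n + 1) = .watch .p (lastLabel w n) false := by
  have hres : resolverRun w (n + 1) = (resolve (resolver.hist w n) (w n)).2.2 :=
    lastTarget_concat _ _
  rw [hres, resolve, if_pos ⟨h, hy⟩, map_hist_eq_wordSegment, foldl_scanLetter_wordSegment]

theorem resolverRun_label {i : ℕ} {τ : Tracker} {γ : Fin 6} {f : Bool}
    (h : resolverRun w i = .watch τ γ f) : γ = lastLabel w i := by
  have hρ := isRunFrom_resolverRun (w := w)
  induction i generalizing τ γ f with
  | zero => cases h
  | succ i ih =>
    rcases hi : resolverRun w i with _ | ⟨τ', γ', f'⟩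
    · by_cases hy : w i = .y
      · rw [resolverRun_succ_of_reset hi hy] at h
        cases h
        simp [lastLabel, event_eq_none_of_eq_y hy]
      · cases h.symm.trans (run_succ_of_wait hρ hi hy)
    · cases he : event w i with
      | none =>
        rw [run_succ_of_event_eq_none hρ hi he] at h
        cases h
        simp [lastLabel, he, ih hi]
      | some d =>
        rcases run_succ_of_event_eq_some hρ hi he with h' | ⟨f'', h'⟩ <;> rw [h'] at h <;> cases h
        simp [lastLabel, he]

/-- A raised flag records the event that raised it. -/
theorem resolverRun_flag {i : ℕ} {τ : Tracker} {γ : Fin 6}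
    (h : resolverRun w i = .watch τ γ true) :
    ∃ e < i, DigitEvent w e γ ∧ lastLabel w e ≠ γ ∧ Quiet w (e + 1) i ∧
      ∀ j, e < j → j ≤ i → resolverRun w j ≠ .wait := by
  have hρ := isRunFrom_resolverRun (w := w)
  induction i generalizing τ γ with
  | zero => cases h
  | succ i ih =>
    have hwatch : resolverRun w (i + 1) ≠ .wait := by rw [h]; exact fun h' => by cases h'
    rcases hi : resolverRun w i with _ | ⟨τ', γ', f'⟩
    · by_cases hy : w i = .y
      · rw [resolverRun_succ_of_reset hi hy] at h; cases h
      · exact absurd (run_succ_of_wait hρ hi hy) hwatch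
    cases he : event w i with
    | none =>
      rw [run_succ_of_event_eq_none hρ hi he] at h
      obtain ⟨-, rfl, rfl⟩ := State.watch.inj h
      obtain ⟨e, hei, hd, hne, hq, hnw⟩ := ih hi
      refine ⟨e, by omega, hd, hne, fun j h₁ h₂ => ?_, fun j h₁ h₂ => ?_⟩
      · rcases Nat.lt_succ_iff_lt_or_eq.mp h₂ with h₂ | rfl
        exacts [hq j h₁ h₂, he]
      · rcases Nat.lt_or_eq_of_le h₂ with h₂ | rfl
        exacts [hnw j h₁ (Nat.lt_succ_iff.mp h₂), hwatch]
    | some d =>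
      rcases event_eq_some_iff.mp he with hres | hd
      · rw [run_succ_of_res hρ hi hres] at h; cases h
      · rw [run_succ_of_digitEvent hρ hi hd] at h
        split_ifs at h
        obtain ⟨-, rfl, hne⟩ := State.watch.inj h
        refine ⟨i, i.lt_succ_self, hd, ?_, fun j h₁ h₂ => by omega, fun j h₁ h₂ => ?_⟩
        · rw [← resolverRun_label hi]
          simpa using hne
        · obtain rfl : j = i + 1 := by omega
          exact hwatch

/-- Given three significant transitions after `N`, the resolver's run enters `wait` between the
second and the third. The digit event causing this entry, the event that raised the flag before
it, and the last event before that one form a `Pattern`; it starts after the first significant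
transition because the run also entered `wait`, hence saw an event, between the first two. -/
theorem resolver_inducedCoBuchiAcc (hw : w ∉ LMain) : resolver.InducedCoBuchiAcc w := by
  have hρ := isRunFrom_resolverRun (w := w)
  simp only [BuchiAutomaton.Resolver.InducedCoBuchiAcc, resolver_res_hist, run_mem_sig_iff hρ]
  rw [mem_iff_pattern, not_and_or] at hw
  push Not at hw
  rcases hw with ⟨N, hN⟩ | ⟨N, hN⟩
  · exact ⟨N, fun n hn h => hN n hn h.2⟩
  by_contra! hsig
  obtain ⟨s, hs, hs₁, hs₂⟩ := hsig N
  obtain ⟨s', hs', hs'₁, hs'₂⟩ := hsig (s + 1)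
  obtain ⟨s'', hs'', hs''₁, -⟩ := hsig (s' + 1)
  obtain ⟨e, _, _, hse, hes', _, hd⟩ :=
    exists_flagged_digitEvent_before_wait hρ hs₁ hs₂ (by omega) hs'₁
  obtain ⟨e₂, _, γ, hs'e₂, -, h₂, hd₂⟩ :=
    exists_flagged_digitEvent_before_wait hρ hs'₁ hs'₂ (by omega) hs''₁
  obtain ⟨e₁, he₁e₂, hd₁, hne, hq₁₂, hnw⟩ := resolverRun_flag h₂
  have hs'e₁ : s' < e₁ := by
    by_contra! h
    rcases h.lt_or_eq with h | rfl
    · exact hnw s' h hs'e₂.le hs'₁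
    · cases hs'₂.symm.trans hd₁.1
  obtain ⟨e₀, hee₀, he₀e₁, he₀, hq₀₁⟩ := exists_last_event hd.event_eq (by omega : e < e₁)
  exact hN _ _ e₀ e₁ e₂ (by omega) ⟨hne, he₀, hd₁, hd₂, he₀e₁, he₁e₂, hq₀₁, hq₁₂⟩

theorem coLang_monitor : monitor.CoLang = LMainᶜ := by
  ext w
  constructor
  · rintro ⟨ρ, hρ, N, hN⟩ hw
    obtain ⟨i, hi, hsig⟩ := run_buchiAcc_of_mem_LMain hρ hw N
    exact hN i hi hsig
  · intro hw
    obtain ⟨N, hN⟩ := resolver_inducedCoBuchiAcc hw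
    exact ⟨resolverRun w, isRunFrom_resolverRun, N, fun n hn => resolver_res_hist n ▸ hN n hn⟩

theorem coHistoryDeterministic_monitor : monitor.CoHistoryDeterministic :=
  ⟨resolver, fun _ hw => resolver_inducedCoBuchiAcc (by rwa [coLang_monitor] at hw)⟩

end LMain

/-- There is a history-deterministic coBüchi automaton with 61
states recognising the complement of `L_main`. -/
theorem exists_hd_cobuchi_61_states_for_compl_LMain :
    ∃ (Q : Type) (iQ : Fintype Q) (A : BuchiAutomaton Al Q),
      @Fintype.card Q iQ = 61 ∧ A.CoHistoryDeterministic ∧ A.CoLang = LMainᶜ :=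
  ⟨LMain.State, inferInstance, LMain.monitor, LMain.card_state,
    LMain.coHistoryDeterministic_monitor, LMain.coLang_monitor⟩
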